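/- arXiv:1308.0586 — 2 statements merged into one kernel-verified Lean document; each statement's English description precedes it below -/
import Mathlib

section
/- Let f : ℝⁿ → ℝⁿ be C¹ and suppose μ(J(x)) ≤ −c < 0 for all x, where μ is the matrix measure of some norm. Then any two solutions x(·), ξ(·) of ẋ = f(x) satisfy |x(t) − ξ(t)| ≤ |x(0) − ξ(0)| e^{−ct} for all t ≥ 0. -/
open Matrix Filter Set Topology

/-- `N` is a norm on `ℝⁿ`. -/
def IsNorm {n : ℕ} (N : (Fin n → ℝ) → ℝ) : Prop :=
  (∀ v, N v = 0 ↔ v = 0) ∧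
  (∀ (c : ℝ) v, N (c • v) = |c| * N v) ∧
  (∀ u v, N (u + v) ≤ N u + N v)

/-- Operator (induced matrix) norm of `A` with respect to the vector norm `N`. -/
noncomputable def opNorm {n : ℕ} (N : (Fin n → ℝ) → ℝ)
    (A : Matrix (Fin n) (Fin n) ℝ) : ℝ :=
  sSup ((fun v => N (A.mulVec v)) '' {v | N v ≤ 1})

/-- Matrix measure (logarithmic norm): `μ(A) = lim_{h→0⁺} (‖I + hA‖ − 1)/h`. -/
noncomputable def matMeasure {n : ℕ} (N : (Fin n → ℝ) → ℝ)
    (A : Matrix (Fin n) (Fin n) ℝ) : ℝ :=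
  limUnder (𝓝[>] (0:ℝ)) (fun h => (opNorm N (1 + h • A) - 1) / h)

/-- The Jacobian matrix of `f` at `x`. -/
noncomputable def jac {n : ℕ} (f : (Fin n → ℝ) → (Fin n → ℝ)) (x : Fin n → ℝ) :
    Matrix (Fin n) (Fin n) ℝ :=
  LinearMap.toMatrix' (fderiv ℝ f x).toLinearMap

/-- Upper right Dini derivative. -/
noncomputable def diniUpper (φ : ℝ → ℝ) (t : ℝ) : ℝ :=
  limsup (fun h => (φ (t + h) - φ t) / h) (𝓝[>] (0:ℝ))

/-!
Write `v = x - ξ`. Since `v(t + h) = v(t) + h (f(x(t)) - f(ξ(t))) + o(h)`, and by the mean value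
theorem applied to `u ↦ u + h f(u)` on the segment `[ξ(t), x(t)]`,
`‖v(t) + h (f(x(t)) - f(ξ(t)))‖ ≤ sup_z ‖1 + h J(z)‖ ‖v(t)‖ ≤ (1 + h (-c + δ)) ‖v(t)‖`
for all small `h > 0`. The last bound is uniform on the segment because the slopes
`(‖1 + h J(z)‖ - 1) / h` of the convex function `h ↦ ‖1 + h J(z)‖` decrease to `μ(J(z))` and
depend continuously on `z` (Dini's argument). Hence the upper right Dini derivative of `‖v‖` is
at most `-c ‖v‖`, and Grönwall's comparison gives the exponential bound.
-/

namespace ContinuousLinearMap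

variable {E : Type*} [NormedAddCommGroup E] [NormedSpace ℝ E]

/-- The logarithmic norm `μ(T) = lim_{h → 0⁺} (‖1 + h T‖ - 1) / h`, taken as the right derivative
at `0` of the convex function `h ↦ ‖1 + h T‖`, which always exists. -/
noncomputable def logNorm (T : E →L[ℝ] E) : ℝ :=
  derivWithin (fun h : ℝ => ‖1 + h • T‖) (Ioi 0) 0

theorem convexOn_norm_one_add_smul (T : E →L[ℝ] E) :
    ConvexOn ℝ univ fun h : ℝ => ‖1 + h • T‖ :=
  convexOn_univ_norm.comp_affineMap (AffineMap.lineMap 1 (1 + T))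
    |>.congr fun h _ => by simp [AffineMap.lineMap_apply, add_comm]

theorem tendsto_slope_logNorm (T : E →L[ℝ] E) :
    Tendsto (slope (fun h : ℝ => ‖1 + h • T‖) 0) (𝓝[>] 0) (𝓝 (logNorm T)) :=
  (hasDerivWithinAt_iff_tendsto_slope' self_notMem_Ioi).1 <|
    (convexOn_norm_one_add_smul T).hasDerivWithinAt_rightDeriv_of_mem_interior (by simp)

theorem logNorm_eq_limUnder [Nontrivial E] (T : E →L[ℝ] E) :
    logNorm T = limUnder (𝓝[>] (0:ℝ)) fun h => (‖1 + h • T‖ - 1) / h := by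
  refine ((tendsto_slope_logNorm T).congr fun h => ?_).limUnder_eq.symm
  simp [slope_def_field]

theorem slope_norm_one_add_smul_mono (T : E →L[ℝ] E) {h h' : ℝ} (hh : 0 < h) (hh' : h ≤ h') :
    slope (fun h : ℝ => ‖1 + h • T‖) 0 h ≤ slope (fun h : ℝ => ‖1 + h • T‖) 0 h' :=
  (convexOn_norm_one_add_smul T).monotoneOn_slope_gt (mem_univ 0) ⟨mem_univ h, hh⟩
    ⟨mem_univ h', hh.trans_le hh'⟩ hh'

theorem norm_one_add_smul_le_of_slope_le {T : E →L[ℝ] E} {h a : ℝ} (hh : 0 < h)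
    (ha : slope (fun h : ℝ => ‖1 + h • T‖) 0 h ≤ a) : ‖1 + h • T‖ ≤ 1 + h * a := by
  rw [slope_def_field, div_le_iff₀ (by simpa using hh)] at ha
  simp only [zero_smul, add_zero, sub_zero] at ha
  have : ‖(1 : E →L[ℝ] E)‖ ≤ 1 := norm_id_le
  linarith

/-- Dini's argument: the slopes decrease to the logarithmic norm and are continuous in `z`. -/
theorem eventually_forall_norm_one_add_smul_le {X : Type*} [TopologicalSpace X] {K : Set X}
    (hK : IsCompact K) {T : X → E →L[ℝ] E} (hT : Continuous T) {a : ℝ}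
    (ha : ∀ z ∈ K, logNorm (T z) < a) :
    ∀ᶠ h in 𝓝[>] 0, ∀ z ∈ K, ‖1 + h • T z‖ ≤ 1 + h * a := by
  let U : Ioi (0:ℝ) → Set X := fun h => {z | slope (fun h : ℝ => ‖1 + h • T z‖) 0 h < a}
  have hUo : ∀ h, IsOpen (U h) := fun h =>
    isOpen_lt (by simp only [slope_def_field]; fun_prop) continuous_const
  have hKU : K ⊆ ⋃ h, U h := fun z hz => by
    obtain ⟨h, hlt, hpos⟩ :=
      (((tendsto_slope_logNorm (T z)).eventually (gt_mem_nhds (ha z hz))).and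
        self_mem_nhdsWithin).exists
    exact mem_iUnion.2 ⟨⟨h, hpos⟩, hlt⟩
  have hU : ∀ h h' : Ioi (0:ℝ), (h : ℝ) ≤ h' → U h' ⊆ U h := fun h h' hle z hz =>
    (slope_norm_one_add_smul_mono _ h.2 hle).trans_lt hz
  obtain ⟨h₀, hK₀⟩ := hK.elim_directed_cover U hUo hKU fun h h' =>
    ⟨min h h', hU _ _ (min_le_left _ _), hU _ _ (min_le_right _ _)⟩
  filter_upwards [Ioc_mem_nhdsGT h₀.2] with h hh z hz
  exact norm_one_add_smul_le_of_slope_le hh.1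
    ((slope_norm_one_add_smul_mono _ hh.1 hh.2).trans (hK₀ hz).le)

end ContinuousLinearMap

section Contraction

open ContinuousLinearMap

variable {E : Type*} [NormedAddCommGroup E] [NormedSpace ℝ E]

theorem eventually_norm_sub_add_smul_sub_le {f : E → E} (hf : ContDiff ℝ 1 f) {a b : E} {m : ℝ}
    (hm : ∀ z ∈ segment ℝ b a, logNorm (fderiv ℝ f z) < m) :
    ∀ᶠ h in 𝓝[>] 0, ‖a - b + h • (f a - f b)‖ ≤ (1 + h * m) * ‖a - b‖ := by
  have hK : IsCompact (segment ℝ b a) := by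
    rw [segment_eq_image_lineMap]
    exact isCompact_Icc.image AffineMap.lineMap_continuous
  filter_upwards [eventually_forall_norm_one_add_smul_le hK (hf.continuous_fderiv one_ne_zero) hm]
    with h hh
  have hG : ∀ u ∈ segment ℝ b a, HasFDerivWithinAt (fun u => u + h • f u)
      (1 + h • fderiv ℝ f u) (segment ℝ b a) u := fun u _ =>
    ((hasFDerivAt_id u).add (((hf.differentiable one_ne_zero) u).hasFDerivAt.const_smul h))
      |>.hasFDerivWithinAt
  convert (convex_segment b a).norm_image_sub_le_of_norm_hasFDerivWithin_le hG hh
    (left_mem_segment ℝ b a) (right_mem_segment ℝ b a) using 2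
  simp only [smul_sub]
  abel

theorem eventually_slope_norm_lt {v : ℝ → E} {w : E} {t m r : ℝ}
    (hv : HasDerivWithinAt v w (Ici t) t)
    (hvw : ∀ᶠ h in 𝓝[>] 0, ‖v t + h • w‖ ≤ (1 + h * m) * ‖v t‖) (hr : m * ‖v t‖ < r) :
    ∀ᶠ z in 𝓝[>] t, slope (fun s => ‖v s‖) t z < r := by
  have hslope : Tendsto (fun z => ‖slope v t z - w‖) (𝓝[>] t) (𝓝 0) :=
    tendsto_iff_norm_sub_tendsto_zero.1 <| (hasDerivWithinAt_iff_tendsto_slope' self_notMem_Ioi).1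
      (hv.mono Ioi_subset_Ici_self)
  have hshift : Tendsto (fun z => z - t) (𝓝[>] t) (𝓝[>] 0) :=
    tendsto_nhdsWithin_of_tendsto_nhds_of_eventually_within _
      (((continuous_sub_right t).tendsto' t 0 (sub_self t)).mono_left nhdsWithin_le_nhds)
      (eventually_mem_nhdsWithin.mono fun z (hz : t < z) => sub_pos.2 hz)
  filter_upwards [hshift.eventually hvw, hslope.eventually (gt_mem_nhds (sub_pos.2 hr)),
    self_mem_nhdsWithin] with z hz hzw (hzt : t < z)
  have hpos : 0 < z - t := sub_pos.2 hzt
  have hvz : v z = v t + (z - t) • w + (z - t) • (slope v t z - w) := by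
    rw [smul_sub, sub_smul_slope, vsub_eq_sub]
    abel
  have : ‖v z‖ ≤ (1 + (z - t) * m) * ‖v t‖ + (z - t) * ‖slope v t z - w‖ := by
    rw [hvz]
    refine (norm_add_le _ _).trans (add_le_add hz ?_)
    rw [norm_smul, Real.norm_of_nonneg hpos.le]
  rw [slope_def_field, div_lt_iff₀ hpos]
  linarith [mul_lt_mul_of_pos_left hzw hpos]

theorem eventually_slope_norm_sub_lt {f : E → E} (hf : ContDiff ℝ 1 f) {c : ℝ}
    (hμ : ∀ z, logNorm (fderiv ℝ f z) ≤ -c) {x ξ : ℝ → E} {t r : ℝ}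
    (hx : HasDerivWithinAt x (f (x t)) (Ici t) t) (hξ : HasDerivWithinAt ξ (f (ξ t)) (Ici t) t)
    (hr : -c * ‖x t - ξ t‖ < r) :
    ∀ᶠ z in 𝓝[>] t, slope (fun s => ‖x s - ξ s‖) t z < r := by
  obtain ⟨m, hmr, hcm⟩ := ((((continuous_mul_const ‖x t - ξ t‖).tendsto (-c)).mono_left
    (nhdsWithin_le_nhds (s := Ioi (-c)))).eventually (gt_mem_nhds hr)
      |>.and self_mem_nhdsWithin).exists
  exact eventually_slope_norm_lt (hx.sub hξ)
    (eventually_norm_sub_add_smul_sub_le hf fun z _ => (hμ z).trans_lt hcm) hmr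

theorem norm_sub_le_mul_exp_of_logNorm_le {f : E → E} (hf : ContDiff ℝ 1 f) {c : ℝ}
    (hμ : ∀ z, logNorm (fderiv ℝ f z) ≤ -c) {x ξ : ℝ → E}
    (hx : ∀ t ∈ Ici (0:ℝ), HasDerivWithinAt x (f (x t)) (Ici 0) t)
    (hξ : ∀ t ∈ Ici (0:ℝ), HasDerivWithinAt ξ (f (ξ t)) (Ici 0) t) {t : ℝ} (ht : 0 ≤ t) :
    ‖x t - ξ t‖ ≤ ‖x 0 - ξ 0‖ * Real.exp (-c * t) := by
  have hcont : ContinuousOn (fun s => ‖x s - ξ s‖) (Icc 0 t) := fun s hs =>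
    ((hx s hs.1).continuousWithinAt.sub (hξ s hs.1).continuousWithinAt).norm.mono
      Icc_subset_Ici_self
  have := le_gronwallBound_of_liminf_deriv_right_le (f' := fun s => -c * ‖x s - ξ s‖) (K := -c)
    (ε := 0) hcont (fun s hs r hr => ?_) le_rfl (fun s _ => by simp) t ⟨ht, le_rfl⟩
  · simpa [gronwallBound_ε0] using this
  have hsub : Ici s ⊆ Ici 0 := Ici_subset_Ici.2 hs.1
  exact (eventually_slope_norm_sub_lt hf hμ ((hx s hs.1).mono hsub) ((hξ s hs.1).mono hsub)
    hr).frequently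

end Contraction

theorem IsNorm.nonneg {n : ℕ} {N : (Fin n → ℝ) → ℝ} (hN : IsNorm N) (v : Fin n → ℝ) :
    0 ≤ N v := by
  have h := hN.2.2 v (-v)
  rw [add_neg_cancel, (hN.1 0).2 rfl, ← neg_one_smul ℝ v, hN.2.1, abs_neg, abs_one, one_mul] at h
  linarith

def WithNorm {n : ℕ} (_N : (Fin n → ℝ) → ℝ) : Type := Fin n → ℝ

namespace WithNorm

variable {n : ℕ} (N : (Fin n → ℝ) → ℝ)

instance : AddCommGroup (WithNorm N) := inferInstanceAs (AddCommGroup (Fin n → ℝ))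
instance : Module ℝ (WithNorm N) := inferInstanceAs (Module ℝ (Fin n → ℝ))
instance : FiniteDimensional ℝ (WithNorm N) := inferInstanceAs (FiniteDimensional ℝ (Fin n → ℝ))
instance : Norm (WithNorm N) := ⟨N⟩

variable [hN : Fact (IsNorm N)]

theorem normedSpaceCore : NormedSpace.Core ℝ (WithNorm N) where
  norm_nonneg := hN.out.nonneg
  norm_smul := hN.out.2.1
  norm_triangle := hN.out.2.2
  norm_eq_zero_iff := hN.out.1

noncomputable instance : NormedAddCommGroup (WithNorm N) := .ofCore (normedSpaceCore N)
noncomputable instance : NormedSpace ℝ (WithNorm N) := .ofCore (normedSpaceCore N)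

noncomputable def equiv : (Fin n → ℝ) ≃L[ℝ] WithNorm N :=
  LinearEquiv.toContinuousLinearEquiv (LinearEquiv.refl ℝ (Fin n → ℝ))

theorem opNorm_toMatrix' (T : (Fin n → ℝ) →L[ℝ] (Fin n → ℝ)) :
    opNorm N (LinearMap.toMatrix' (T : (Fin n → ℝ) →ₗ[ℝ] (Fin n → ℝ))) =
      ‖(equiv N).conjContinuousAlgEquiv T‖ := by
  rw [← ContinuousLinearMap.sSup_unitClosedBall_eq_norm, opNorm]
  congr 1
  ext r
  simp only [mem_image, mem_ofPred_eq, Metric.mem_closedBall, dist_zero_right,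
    ContinuousLinearEquiv.conjContinuousAlgEquiv_apply_apply, LinearMap.toMatrix'_mulVec]
  exact Iff.rfl

theorem matMeasure_toMatrix' [Nontrivial (WithNorm N)] (T : (Fin n → ℝ) →L[ℝ] (Fin n → ℝ)) :
    matMeasure N (LinearMap.toMatrix' (T : (Fin n → ℝ) →ₗ[ℝ] (Fin n → ℝ))) =
      ContinuousLinearMap.logNorm ((equiv N).conjContinuousAlgEquiv T) := by
  rw [matMeasure, ContinuousLinearMap.logNorm_eq_limUnder]
  congr 1
  funext h
  have : 1 + h • LinearMap.toMatrix' (T : (Fin n → ℝ) →ₗ[ℝ] (Fin n → ℝ)) =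
      LinearMap.toMatrix' ((1 + h • T : (Fin n → ℝ) →L[ℝ] (Fin n → ℝ)) :
        (Fin n → ℝ) →ₗ[ℝ] (Fin n → ℝ)) := by
    simp
  rw [this, opNorm_toMatrix', map_add, map_smul, map_one]

theorem logNorm_fderiv_conj [Nontrivial (WithNorm N)] {f : (Fin n → ℝ) → (Fin n → ℝ)}
    (hf : Differentiable ℝ f) (z : WithNorm N) :
    ContinuousLinearMap.logNorm (fderiv ℝ (equiv N ∘ f ∘ (equiv N).symm) z) =
      matMeasure N (jac f ((equiv N).symm z)) := by
  have : HasFDerivAt (equiv N ∘ f ∘ (equiv N).symm)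
      ((equiv N).conjContinuousAlgEquiv (fderiv ℝ f ((equiv N).symm z))) z :=
    (equiv N).hasFDerivAt.comp z ((hf _).hasFDerivAt.comp z (equiv N).symm.hasFDerivAt)
  rw [this.fderiv, jac, matMeasure_toMatrix']

end WithNorm

theorem stmt_9_general {n : ℕ} (N : (Fin n → ℝ) → ℝ) (hN : IsNorm N)
    (f : (Fin n → ℝ) → (Fin n → ℝ)) (hf : ContDiff ℝ 1 f)
    (c : ℝ) (hμ : ∀ x, matMeasure N (jac f x) ≤ -c)
    (x ξ : ℝ → (Fin n → ℝ))
    (hx : ∀ t ∈ Ici (0:ℝ), HasDerivWithinAt x (f (x t)) (Ici 0) t)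
    (hξ : ∀ t ∈ Ici (0:ℝ), HasDerivWithinAt ξ (f (ξ t)) (Ici 0) t) :
    ∀ t ∈ Ici (0:ℝ), N (x t - ξ t) ≤ N (x 0 - ξ 0) * Real.exp (-c * t) := by
  intro t ht
  rcases subsingleton_or_nontrivial (Fin n → ℝ) with _ | hE
  · rw [Subsingleton.elim (x t - ξ t) 0, (hN.1 0).2 rfl]
    exact mul_nonneg (hN.nonneg _) (Real.exp_pos _).le
  have : Fact (IsNorm N) := ⟨hN⟩
  have : Nontrivial (WithNorm N) := hE
  let e := WithNorm.equiv N
  have hF : ContDiff ℝ 1 (e ∘ f ∘ e.symm) := e.contDiff.comp (hf.comp e.symm.contDiff)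
  have hμF (z) : ContinuousLinearMap.logNorm (fderiv ℝ (e ∘ f ∘ e.symm) z) ≤ -c := by
    rw [WithNorm.logNorm_fderiv_conj N (hf.differentiable one_ne_zero)]
    exact hμ _
  have hsol (y : ℝ → Fin n → ℝ) (hy : ∀ t ∈ Ici (0:ℝ), HasDerivWithinAt y (f (y t)) (Ici 0) t)
      (t) (ht : t ∈ Ici (0:ℝ)) :
      HasDerivWithinAt (e ∘ y) ((e ∘ f ∘ e.symm) ((e ∘ y) t)) (Ici 0) t :=
    e.hasFDerivAt.comp_hasDerivWithinAt t (hy t ht)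
  -- `e` is the identity map and `‖e v‖` is `N v` by definition.
  exact norm_sub_le_mul_exp_of_logNorm_le hF hμF (hsol x hx) (hsol ξ hξ) ht

/-- Contraction: any two solutions converge exponentially: `|x(t)−ξ(t)| ≤ |x(0)−ξ(0)|e^{-ct}`. -/
theorem stmt_9 {n : ℕ} (N : (Fin n → ℝ) → ℝ) (hN : IsNorm N)
    (f : (Fin n → ℝ) → (Fin n → ℝ)) (hf : ContDiff ℝ 1 f)
    (c : ℝ) (hc : 0 < c) (hμ : ∀ x, matMeasure N (jac f x) ≤ -c)
    (x ξ : ℝ → (Fin n → ℝ))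
    (hx : ∀ t ∈ Ici (0:ℝ), HasDerivWithinAt x (f (x t)) (Ici 0) t)
    (hξ : ∀ t ∈ Ici (0:ℝ), HasDerivWithinAt ξ (f (ξ t)) (Ici 0) t) :
    ∀ t ∈ Ici (0:ℝ), N (x t - ξ t) ≤ N (x 0 - ξ 0) * Real.exp (-c * t) :=
  stmt_9_general N hN f hf c hμ x ξ hx hξ
end

section
/- Let f : ℝⁿ → ℝⁿ be C¹ with μ(J(x)) ≤ −c < 0 for all x for some matrix measure μ. Then f has exactly one zero x* in ℝⁿ. -/
/-!
Let `D(u, w)` be the right derivative of the norm at `u` in the direction `w`. It is subadditive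
in `w`, bounded by `N w`, and `D(u, t • A u) ≤ t μ(A) N u` for `t > 0`. Along the segment
`s ↦ f (y + s • u)`, `u = x - y`, whose velocity is `J u`, the function
`s ↦ D(u, f (y + s • u) - f y) + c s N u` therefore has nonpositive right Dini derivative, so
`D(u, f x - f y) ≤ -c N u`; as `D(u, w) ≥ -N w`, this gives `c N (x - y) ≤ N (f x - f y)`.
So `f` is antilipschitz: it is injective and proper, making its range closed, and its
derivative is everywhere invertible, making its range open by the inverse function theorem.
-/

open Matrix Filter Set Topology

namespace IsNorm

variable {n : ℕ} {N : (Fin n → ℝ) → ℝ}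

theorem eq_zero_iff (hN : IsNorm N) (v : Fin n → ℝ) : N v = 0 ↔ v = 0 := hN.1 v

theorem map_smul (hN : IsNorm N) (c : ℝ) (v : Fin n → ℝ) : N (c • v) = |c| * N v := hN.2.1 c v

theorem map_smul_of_nonneg (hN : IsNorm N) {c : ℝ} (hc : 0 ≤ c) (v : Fin n → ℝ) :
    N (c • v) = c * N v := by
  rw [hN.map_smul, abs_of_nonneg hc]

theorem add_le (hN : IsNorm N) (u v : Fin n → ℝ) : N (u + v) ≤ N u + N v := hN.2.2 u v

theorem map_zero (hN : IsNorm N) : N 0 = 0 := (hN.eq_zero_iff 0).2 rfl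

theorem map_neg (hN : IsNorm N) (v : Fin n → ℝ) : N (-v) = N v := by
  simpa using hN.map_smul (-1) v

theorem nonneg_s10 (hN : IsNorm N) (v : Fin n → ℝ) : 0 ≤ N v := by
  have h := hN.add_le v (-v)
  rw [add_neg_cancel, hN.map_zero, hN.map_neg] at h
  linarith

theorem pos (hN : IsNorm N) {v : Fin n → ℝ} (hv : v ≠ 0) : 0 < N v :=
  (hN.nonneg_s10 v).lt_of_ne fun h => hv ((hN.eq_zero_iff v).1 h.symm)

theorem sub_le (hN : IsNorm N) (u v : Fin n → ℝ) : N u - N v ≤ N (u - v) := by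
  simpa using hN.add_le (u - v) v

theorem abs_sub_le (hN : IsNorm N) (u v : Fin n → ℝ) : |N u - N v| ≤ N (u - v) := by
  refine abs_sub_le_iff.2 ⟨hN.sub_le u v, ?_⟩
  simpa [← hN.map_neg (u - v)] using hN.sub_le v u

theorem sum_le (hN : IsNorm N) {ι : Type*} (s : Finset ι) (g : ι → Fin n → ℝ) :
    N (∑ i ∈ s, g i) ≤ ∑ i ∈ s, N (g i) := by
  classical
  induction s using Finset.induction with
  | empty => simp [hN.map_zero]
  | insert i s hi ih =>
    rw [Finset.sum_insert hi, Finset.sum_insert hi]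
    exact (hN.add_le _ _).trans (by linarith)

theorem exists_le_mul_norm (hN : IsNorm N) : ∃ b > 0, ∀ v, N v ≤ b * ‖v‖ := by
  refine ⟨∑ i, N (Pi.single i 1) + 1,
    by linarith [Finset.sum_nonneg fun i (_ : i ∈ Finset.univ) => hN.nonneg_s10 (Pi.single i 1)],
    fun v => ?_⟩
  calc N v = N (∑ i, v i • Pi.single i 1) := by
        congr 1
        ext j
        simp [Finset.sum_apply, Pi.single_apply]
    _ ≤ ∑ i, |v i| * N (Pi.single i 1) := by
        simp_rw [← hN.map_smul]
        exact hN.sum_le _ _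
    _ ≤ ∑ i, ‖v‖ * N (Pi.single i 1) := by
        gcongr with i
        · exact hN.nonneg_s10 _
        · exact norm_le_pi_norm v i
    _ ≤ (∑ i, N (Pi.single i 1) + 1) * ‖v‖ := by
        rw [← Finset.mul_sum, mul_comm]
        nlinarith [norm_nonneg v]

theorem continuous (hN : IsNorm N) : Continuous N := by
  obtain ⟨b, hb, hle⟩ := hN.exists_le_mul_norm
  refine (LipschitzWith.of_dist_le_mul (K := b.toNNReal) fun u v => ?_).continuous
  rw [Real.dist_eq, Real.coe_toNNReal b hb.le, dist_eq_norm]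
  exact (hN.abs_sub_le u v).trans (hle _)

theorem exists_mul_norm_le (hN : IsNorm N) : ∃ a > 0, ∀ v, a * ‖v‖ ≤ N v := by
  rcases isEmpty_or_nonempty (Fin n) with hn | hn
  · exact ⟨1, one_pos, fun v => by simp [Subsingleton.elim v 0, hN.map_zero]⟩
  obtain ⟨x₀, hx₀, hmin⟩ := (isCompact_sphere (0 : Fin n → ℝ) 1).exists_isMinOn
    (NormedSpace.sphere_nonempty.2 zero_le_one) hN.continuous.continuousOn
  refine ⟨N x₀, hN.pos (ne_zero_of_mem_unit_sphere ⟨x₀, hx₀⟩), fun v => ?_⟩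
  rcases eq_or_ne v 0 with rfl | hv
  · simp [hN.map_zero]
  have hv' : 0 < ‖v‖ := norm_pos_iff.2 hv
  have hunit : ‖v‖⁻¹ • v ∈ Metric.sphere (0 : Fin n → ℝ) 1 := by
    simp [norm_smul, hv'.ne']
  calc N x₀ * ‖v‖ ≤ N (‖v‖⁻¹ • v) * ‖v‖ := by gcongr; exact hmin hunit
    _ = N v := by rw [hN.map_smul_of_nonneg (by positivity)]; field_simp

theorem bddAbove_image_mulVec (hN : IsNorm N) (A : Matrix (Fin n) (Fin n) ℝ) :
    BddAbove ((fun v => N (A *ᵥ v)) '' {v | N v ≤ 1}) := by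
  obtain ⟨a, ha, hle⟩ := hN.exists_mul_norm_le
  have hball : {v | N v ≤ 1} ⊆ Metric.closedBall 0 a⁻¹ := fun v hv => by
    rw [mem_closedBall_zero_iff, ← one_div, le_div_iff₀' ha]
    exact (hle v).trans hv
  have hcompact : IsCompact {v | N v ≤ 1} :=
    Metric.isCompact_of_isClosed_isBounded (isClosed_le hN.continuous continuous_const)
      (Metric.isBounded_closedBall.subset hball)
  exact hcompact.bddAbove_image
    (hN.continuous.comp A.mulVecLin.continuous_of_finiteDimensional).continuousOn

theorem le_opNorm_of_le_one (hN : IsNorm N) (A : Matrix (Fin n) (Fin n) ℝ) {v : Fin n → ℝ}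
    (hv : N v ≤ 1) : N (A *ᵥ v) ≤ opNorm N A :=
  le_csSup (hN.bddAbove_image_mulVec A) ⟨v, hv, rfl⟩

theorem le_opNorm (hN : IsNorm N) (A : Matrix (Fin n) (Fin n) ℝ) (v : Fin n → ℝ) :
    N (A *ᵥ v) ≤ opNorm N A * N v := by
  rcases eq_or_ne v 0 with rfl | hv
  · simp [hN.map_zero]
  have hNv := hN.pos hv
  have hunit : N ((N v)⁻¹ • v) ≤ 1 := by
    rw [hN.map_smul_of_nonneg (by positivity), inv_mul_cancel₀ hNv.ne']
  have := hN.le_opNorm_of_le_one A hunit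
  rwa [mulVec_smul, hN.map_smul_of_nonneg (by positivity), inv_mul_le_iff₀ hNv, mul_comm] at this

theorem opNorm_le_of_forall (hN : IsNorm N) {A : Matrix (Fin n) (Fin n) ℝ} {K : ℝ}
    (h : ∀ v, N v ≤ 1 → N (A *ᵥ v) ≤ K) : opNorm N A ≤ K :=
  csSup_le ⟨_, ⟨0, by simp [hN.map_zero], rfl⟩⟩ (forall_mem_image.2 h)

theorem opNorm_add_le (hN : IsNorm N) (A B : Matrix (Fin n) (Fin n) ℝ) :
    opNorm N (A + B) ≤ opNorm N A + opNorm N B :=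
  hN.opNorm_le_of_forall fun v hv => by
    rw [add_mulVec]
    exact (hN.add_le _ _).trans
      (add_le_add (hN.le_opNorm_of_le_one A hv) (hN.le_opNorm_of_le_one B hv))

theorem opNorm_smul_le (hN : IsNorm N) (a : ℝ) (A : Matrix (Fin n) (Fin n) ℝ) :
    opNorm N (a • A) ≤ |a| * opNorm N A :=
  hN.opNorm_le_of_forall fun v hv => by
    rw [smul_mulVec, hN.map_smul]
    exact mul_le_mul_of_nonneg_left (hN.le_opNorm_of_le_one A hv) (abs_nonneg a)

theorem opNorm_one (hN : IsNorm N) (hn : n ≠ 0) : opNorm N 1 = 1 := by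
  refine le_antisymm (hN.opNorm_le_of_forall fun v hv => by rwa [one_mulVec]) ?_
  have : Nonempty (Fin n) := ⟨⟨0, Nat.pos_of_ne_zero hn⟩⟩
  obtain ⟨e, he⟩ := exists_ne (0 : Fin n → ℝ)
  have hunit : N ((N e)⁻¹ • e) = 1 := by
    rw [hN.map_smul_of_nonneg (inv_nonneg.2 (hN.nonneg_s10 e)), inv_mul_cancel₀ (hN.pos he).ne']
  simpa [hunit] using hN.le_opNorm_of_le_one 1 hunit.le

theorem convexOn_opNorm_one_add_smul (hN : IsNorm N) (A : Matrix (Fin n) (Fin n) ℝ) :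
    ConvexOn ℝ univ fun h : ℝ => opNorm N (1 + h • A) := by
  refine ⟨convex_univ, fun x _ y _ a b ha hb hab => ?_⟩
  have hcomb : (1 : Matrix (Fin n) (Fin n) ℝ) + (a • x + b • y) • A
      = a • (1 + x • A) + b • (1 + y • A) := by
    nth_rewrite 1 [← one_smul ℝ (1 : Matrix (Fin n) (Fin n) ℝ), ← hab]
    module
  calc opNorm N (1 + (a • x + b • y) • A)
      ≤ |a| * opNorm N (1 + x • A) + |b| * opNorm N (1 + y • A) := by
        rw [hcomb]
        exact (hN.opNorm_add_le _ _).trans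
          (add_le_add (hN.opNorm_smul_le _ _) (hN.opNorm_smul_le _ _))
    _ = a • opNorm N (1 + x • A) + b • opNorm N (1 + y • A) := by
        rw [abs_of_nonneg ha, abs_of_nonneg hb, smul_eq_mul, smul_eq_mul]

theorem monotoneOn_opNorm_quotient (hN : IsNorm N) (hn : n ≠ 0) (A : Matrix (Fin n) (Fin n) ℝ) :
    MonotoneOn (fun h => (opNorm N (1 + h • A) - 1) / h) (Ioi 0) := fun x hx y hy hxy => by
  simpa [hN.opNorm_one hn] using (hN.convexOn_opNorm_one_add_smul A).secant_mono
    (mem_univ 0) (mem_univ x) (mem_univ y) (ne_of_gt hx) (ne_of_gt hy) hxy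

theorem tendsto_matMeasure (hN : IsNorm N) (hn : n ≠ 0) (A : Matrix (Fin n) (Fin n) ℝ) :
    Tendsto (fun h => (opNorm N (1 + h • A) - 1) / h) (𝓝[>] 0) (𝓝 (matMeasure N A)) := by
  have hbdd : BddBelow ((fun h => (opNorm N (1 + h • A) - 1) / h) '' Ioi 0) := by
    refine ⟨-opNorm N A, forall_mem_image.2 fun h (hh : 0 < h) => ?_⟩
    have h1 := hN.opNorm_add_le (1 + h • A) ((-h) • A)
    have h2 := hN.opNorm_smul_le (-h) A
    rw [show 1 + h • A + (-h) • A = 1 by module, hN.opNorm_one hn] at h1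
    rw [abs_neg, abs_of_pos hh] at h2
    rw [le_div_iff₀ hh]
    linarith
  have hlim := (hN.monotoneOn_opNorm_quotient hn A).tendsto_nhdsGT hbdd
  rwa [matMeasure, hlim.limUnder_eq]

end IsNorm

theorem jac_mulVec {n : ℕ} (f : (Fin n → ℝ) → (Fin n → ℝ)) (x u : Fin n → ℝ) :
    jac f x *ᵥ u = fderiv ℝ f x u := by
  rw [jac, ← Matrix.toLin'_apply, Matrix.toLin'_toMatrix']
  rfl

/-- By convexity of `N` the difference quotients are monotone in `h`, so this `limsup` is in fact
a limit: the right derivative of `N` at `v` in the direction `w`. -/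
noncomputable def normDirDeriv {n : ℕ} (N : (Fin n → ℝ) → ℝ) (v w : Fin n → ℝ) : ℝ :=
  limsup (fun h => (N (v + h • w) - N v) / h) (𝓝[>] 0)

namespace IsNorm

variable {n : ℕ} {N : (Fin n → ℝ) → ℝ}

theorem eventually_abs_normQuotient_le (hN : IsNorm N) (v w : Fin n → ℝ) :
    ∀ᶠ h in 𝓝[>] 0, |(N (v + h • w) - N v) / h| ≤ N w := by
  filter_upwards [self_mem_nhdsWithin] with h (hh : 0 < h)
  rw [abs_div, abs_of_pos hh, div_le_iff₀ hh, mul_comm, ← hN.map_smul_of_nonneg hh.le]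
  simpa using hN.abs_sub_le (v + h • w) v

theorem isBoundedUnder_normQuotient (hN : IsNorm N) (v w : Fin n → ℝ) :
    IsBoundedUnder (· ≤ ·) (𝓝[>] 0) fun h => (N (v + h • w) - N v) / h :=
  isBoundedUnder_of_eventually_le ((hN.eventually_abs_normQuotient_le v w).mono fun _ h =>
    (abs_le.1 h).2)

theorem isCoboundedUnder_normQuotient (hN : IsNorm N) (v w : Fin n → ℝ) :
    IsCoboundedUnder (· ≤ ·) (𝓝[>] 0) fun h => (N (v + h • w) - N v) / h :=
  isCoboundedUnder_le_of_eventually_le _ ((hN.eventually_abs_normQuotient_le v w).mono fun _ h =>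
    (abs_le.1 h).1)

theorem normDirDeriv_le (hN : IsNorm N) (v w : Fin n → ℝ) : normDirDeriv N v w ≤ N w :=
  limsup_le_of_le (hN.isCoboundedUnder_normQuotient v w)
    ((hN.eventually_abs_normQuotient_le v w).mono fun _ h => (abs_le.1 h).2)

theorem neg_le_normDirDeriv (hN : IsNorm N) (v w : Fin n → ℝ) : -N w ≤ normDirDeriv N v w :=
  le_limsup_of_frequently_le
    ((hN.eventually_abs_normQuotient_le v w).mono fun _ h => (abs_le.1 h).1).frequently
    (hN.isBoundedUnder_normQuotient v w)

theorem normDirDeriv_zero (v : Fin n → ℝ) : normDirDeriv N v 0 = 0 := by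
  simp [normDirDeriv]

theorem normDirDeriv_add_le (hN : IsNorm N) (v w₁ w₂ : Fin n → ℝ) :
    normDirDeriv N v (w₁ + w₂) ≤ normDirDeriv N v w₁ + normDirDeriv N v w₂ := by
  set q : (Fin n → ℝ) → ℝ → ℝ := fun w h => (N (v + h • w) - N v) / h
  have hdouble : map (2 * ·) (𝓝[>] (0 : ℝ)) = 𝓝[>] 0 := by
    have := map_comap_of_surjective (mul_left_surjective₀ two_ne_zero) (𝓝[>] (0 : ℝ))
    rwa [comap_mulLeft_nhdsGT_zero two_pos] at this
  have hlimsup (w) : limsup (fun h => q w (2 * h)) (𝓝[>] 0) = normDirDeriv N v w := by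
    rw [← Function.comp_def, limsup_comp, hdouble]
    rfl
  have hbound (w) : ∀ᶠ h in 𝓝[>] (0 : ℝ), |q w (2 * h)| ≤ N w := by
    rw [← eventually_map (P := fun h => |q w h| ≤ N w), hdouble]
    exact hN.eventually_abs_normQuotient_le v w
  -- midpoint convexity of `N` between `v + 2h w₁` and `v + 2h w₂`
  have hconvex : ∀ᶠ h in 𝓝[>] (0 : ℝ), q (w₁ + w₂) h ≤ q w₁ (2 * h) + q w₂ (2 * h) := by
    filter_upwards [self_mem_nhdsWithin] with h (hh : 0 < h)
    have hmid : v + h • (w₁ + w₂)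
        = (1 / 2 : ℝ) • (v + (2 * h) • w₁) + (1 / 2 : ℝ) • (v + (2 * h) • w₂) := by
      module
    have := hN.add_le ((1 / 2 : ℝ) • (v + (2 * h) • w₁)) ((1 / 2 : ℝ) • (v + (2 * h) • w₂))
    rw [← hmid, hN.map_smul_of_nonneg (by norm_num), hN.map_smul_of_nonneg (by norm_num)] at this
    simp only [q]
    rw [← add_div, div_le_div_iff₀ hh (by positivity)]
    nlinarith
  have hb₁ := (hbound w₁).mono fun _ h => abs_le.1 h
  have hb₂ := (hbound w₂).mono fun _ h => abs_le.1 h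
  calc normDirDeriv N v (w₁ + w₂) ≤ limsup (fun h => q w₁ (2 * h) + q w₂ (2 * h)) (𝓝[>] 0) :=
        limsup_le_limsup hconvex (hN.isCoboundedUnder_normQuotient v _)
          (isBoundedUnder_of_eventually_le (hb₁.and hb₂ |>.mono fun _ h =>
            add_le_add h.1.2 h.2.2))
    _ ≤ limsup (fun h => q w₁ (2 * h)) (𝓝[>] 0) + limsup (fun h => q w₂ (2 * h)) (𝓝[>] 0) :=
        limsup_add_le (isBoundedUnder_of_eventually_ge (hb₁.mono fun _ h => h.1))
          (isBoundedUnder_of_eventually_le (hb₁.mono fun _ h => h.2))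
          (isCoboundedUnder_le_of_eventually_le _ (hb₂.mono fun _ h => h.1))
          (isBoundedUnder_of_eventually_le (hb₂.mono fun _ h => h.2))
    _ = normDirDeriv N v w₁ + normDirDeriv N v w₂ := by rw [hlimsup, hlimsup]

theorem normDirDeriv_le_add_sub (hN : IsNorm N) (v w w' : Fin n → ℝ) :
    normDirDeriv N v w' ≤ normDirDeriv N v w + N (w' - w) := by
  have := hN.normDirDeriv_add_le v w (w' - w)
  rw [add_sub_cancel] at this
  linarith [hN.normDirDeriv_le v (w' - w)]

theorem continuous_normDirDeriv (hN : IsNorm N) (v : Fin n → ℝ) :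
    Continuous (normDirDeriv N v) := by
  obtain ⟨b, hb, hle⟩ := hN.exists_le_mul_norm
  refine (LipschitzWith.of_dist_le_mul (K := b.toNNReal) fun w w' => ?_).continuous
  rw [Real.dist_eq, Real.coe_toNNReal b hb.le, dist_eq_norm]
  refine (abs_sub_le_iff.2 ⟨?_, ?_⟩).trans (hle _)
  · linarith [hN.normDirDeriv_le_add_sub v w' w]
  · have hsymm := hN.map_neg (w - w')
    rw [neg_sub] at hsymm
    linarith [hN.normDirDeriv_le_add_sub v w w']

theorem normDirDeriv_smul_mulVec_le (hN : IsNorm N) (hn : n ≠ 0) (A : Matrix (Fin n) (Fin n) ℝ)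
    (v : Fin n → ℝ) {t : ℝ} (ht : 0 < t) :
    normDirDeriv N v (t • (A *ᵥ v)) ≤ t * matMeasure N A * N v := by
  have hscale : Tendsto (t * ·) (𝓝[>] (0 : ℝ)) (𝓝[>] 0) :=
    tendsto_iff_comap.2 (comap_mulLeft_nhdsGT_zero ht).ge
  have hlim : Tendsto (fun h => t * ((opNorm N (1 + (t * h) • A) - 1) / (t * h)) * N v)
      (𝓝[>] 0) (𝓝 (t * matMeasure N A * N v)) :=
    (((hN.tendsto_matMeasure hn A).comp hscale).const_mul t).mul_const _
  have hle : ∀ᶠ h in 𝓝[>] (0 : ℝ), (N (v + h • t • (A *ᵥ v)) - N v) / h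
      ≤ t * ((opNorm N (1 + (t * h) • A) - 1) / (t * h)) * N v := by
    filter_upwards [self_mem_nhdsWithin] with h (hh : 0 < h)
    have hop := hN.le_opNorm (1 + (t * h) • A) v
    rw [add_mulVec, one_mulVec, smul_mulVec] at hop
    have hrescale : t * ((opNorm N (1 + (t * h) • A) - 1) / (t * h)) * N v
        = (opNorm N (1 + (t * h) • A) - 1) * N v / h := by
      field_simp
    rw [smul_smul, mul_comm h t, hrescale, div_le_div_iff_of_pos_right hh]
    linarith
  exact (limsup_le_limsup hle (hN.isCoboundedUnder_normQuotient v _)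
    hlim.isBoundedUnder_le).trans_eq hlim.limsup_eq

theorem normDirDeriv_sub_le_of_hasDerivAt (hN : IsNorm N) {g g' : ℝ → Fin n → ℝ}
    (hg : ∀ s, HasDerivAt g (g' s) s) {u : Fin n → ℝ} {K : ℝ}
    (hK : ∀ s, ∀ t > 0, normDirDeriv N u (t • g' s) ≤ t * K) {a b : ℝ} (hab : a ≤ b) :
    normDirDeriv N u (g b - g a) ≤ K * (b - a) := by
  set η : ℝ → ℝ := fun s => normDirDeriv N u (g s - g a) - K * (s - a)
  have hη : Continuous η :=
    ((hN.continuous_normDirDeriv u).comp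
      ((continuous_iff_continuousAt.2 fun s => (hg s).continuousAt).sub continuous_const)).sub
      (by fun_prop)
  obtain ⟨C, hC, hCle⟩ := hN.exists_le_mul_norm
  have hslope (s : ℝ) (r : ℝ) (hr : 0 < r) : ∀ᶠ h in 𝓝[>] (0 : ℝ), η (s + h) - η s < r * h := by
    have hlittleO := (hasDerivAt_iff_isLittleO_nhds_zero.1 (hg s)).def (c := r / (2 * C))
      (by positivity)
    filter_upwards [self_mem_nhdsWithin, nhdsWithin_le_nhds hlittleO] with h (hh : 0 < h) hsmall
    have hsplit := hN.normDirDeriv_add_le u (g s - g a) (g (s + h) - g s)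
    rw [sub_add_sub_cancel'] at hsplit
    have hlin := hN.normDirDeriv_le_add_sub u (h • g' s) (g (s + h) - g s)
    have herr : N (g (s + h) - g s - h • g' s) ≤ r / 2 * h := by
      refine (hCle _).trans ?_
      rw [Real.norm_of_nonneg hh.le] at hsmall
      calc C * ‖g (s + h) - g s - h • g' s‖ ≤ C * (r / (2 * C) * h) := by gcongr
        _ = r / 2 * h := by field_simp
    simp only [η]
    nlinarith [hK s h hh]
  have hmono := image_le_of_liminf_slope_right_le_deriv_boundary (a := a) (b := b) (f := η)
    (B := fun _ => η a) (B' := 0) hη.continuousOn le_rfl continuousOn_const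
    (fun _ _ => hasDerivWithinAt_const _ _ _) (fun s _ r hr => by
      refine Eventually.frequently ?_
      rw [← add_zero s, ← map_add_left_nhdsGT, eventually_map]
      filter_upwards [hslope s r hr, self_mem_nhdsWithin] with h hlt (hh : 0 < h)
      rw [slope_def_field, add_zero, add_sub_cancel_left, div_lt_iff₀ hh]
      exact hlt) ⟨hab, le_rfl⟩
  simpa [η, normDirDeriv_zero] using hmono

theorem mul_le_of_matMeasure_jac_le (hN : IsNorm N) (hn : n ≠ 0)
    {f : (Fin n → ℝ) → (Fin n → ℝ)} (hf : ContDiff ℝ 1 f) {c : ℝ}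
    (hμ : ∀ x, matMeasure N (jac f x) ≤ -c) (x y : Fin n → ℝ) :
    c * N (x - y) ≤ N (f x - f y) := by
  set u := x - y
  have hderiv (s : ℝ) : HasDerivAt (fun s : ℝ => f (y + s • u)) (jac f (y + s • u) *ᵥ u) s := by
    rw [jac_mulVec]
    exact (hf.differentiable one_ne_zero _).hasFDerivAt.comp_hasDerivAt s
      (((hasDerivAt_id s).smul_const u).const_add y |>.congr_deriv (one_smul ℝ u))
  have hK (s : ℝ) (t : ℝ) (ht : 0 < t) :
      normDirDeriv N u (t • (jac f (y + s • u) *ᵥ u)) ≤ t * (-c * N u) := by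
    refine (hN.normDirDeriv_smul_mulVec_le hn _ u ht).trans ?_
    have := mul_le_mul_of_nonneg_right (hμ (y + s • u)) (hN.nonneg_s10 u)
    nlinarith
  have := hN.normDirDeriv_sub_le_of_hasDerivAt hderiv hK zero_le_one
  simp only [one_smul, zero_smul, add_zero, u, add_sub_cancel] at this
  linarith [hN.neg_le_normDirDeriv (x - y) (f x - f y)]

theorem exists_antilipschitzWith (hN : IsNorm N) {f : (Fin n → ℝ) → (Fin n → ℝ)} {c : ℝ}
    (hc : 0 < c) (hf : ∀ x y, c * N (x - y) ≤ N (f x - f y)) : ∃ K, AntilipschitzWith K f := by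
  obtain ⟨a, ha, hale⟩ := hN.exists_mul_norm_le
  obtain ⟨b, hb, hble⟩ := hN.exists_le_mul_norm
  refine ⟨(b / (c * a)).toNNReal, AntilipschitzWith.of_le_mul_dist fun x y => ?_⟩
  rw [Real.coe_toNNReal _ (by positivity), dist_eq_norm, dist_eq_norm, div_mul_eq_mul_div,
    le_div_iff₀ (by positivity)]
  nlinarith [hale (x - y), hble (f x - f y), hf x y]

end IsNorm

section GlobalInverse

variable {E F : Type*} [NormedAddCommGroup E] [NormedSpace ℝ E] [NormedAddCommGroup F]
  [NormedSpace ℝ F]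

theorem HasFDerivAt.antilipschitzWith {f : E → F} {f' : E →L[ℝ] F} {x : E}
    (hf : HasFDerivAt f f' x) {K : NNReal} (hK : AntilipschitzWith K f) :
    AntilipschitzWith K f' := by
  refine f'.antilipschitz_of_bound fun v => ?_
  have hlim : Tendsto (fun k : ℕ => K * ‖(k : ℝ) • (f (x + (k : ℝ)⁻¹ • v) - f x)‖) atTop
      (𝓝 (K * ‖f' v‖)) :=
    ((hf.lim v (by simpa using tendsto_natCast_atTop_atTop)).norm).const_mul _
  refine ge_of_tendsto hlim ((eventually_gt_atTop 0).mono fun k hk => ?_)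
  have hk' : (0 : ℝ) < k := Nat.cast_pos.2 hk
  have := hK.le_mul_dist (x + (k : ℝ)⁻¹ • v) x
  rw [dist_eq_norm, dist_eq_norm, add_sub_cancel_left, norm_smul, Real.norm_of_nonneg
    (by positivity), inv_mul_le_iff₀ hk'] at this
  rwa [norm_smul, Real.norm_of_nonneg hk'.le, mul_left_comm]

theorem ContDiff.surjective_of_antilipschitzWith [FiniteDimensional ℝ E] {f : E → E}
    (hf : ContDiff ℝ 1 f) {K : NNReal} (hK : AntilipschitzWith K f) : Function.Surjective f := by
  have hstrict (x : E) : HasStrictFDerivAt f (fderiv ℝ f x) x :=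
    hf.contDiffAt.hasStrictFDerivAt one_ne_zero
  let f' (x : E) : E ≃L[ℝ] E := (LinearEquiv.ofInjectiveEndo (fderiv ℝ f x).toLinearMap
    ((hstrict x).hasFDerivAt.antilipschitzWith hK).injective).toContinuousLinearEquiv
  have hopen : IsOpen (range f) :=
    (isOpenMap_of_hasStrictFDerivAt_equiv (f' := f') hstrict).isOpen_range
  have hproper : IsProperMap f := isProperMap_iff_tendsto_cocompact.2
    ⟨hf.continuous, by simpa [Metric.cobounded_eq_cocompact] using hK.tendsto_cobounded⟩
  exact range_eq_univ.1 (IsClopen.eq_univ ⟨hproper.isClosedMap.isClosed_range, hopen⟩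
    (range_nonempty f))

end GlobalInverse

/-- Under the uniform contraction bound, `f` has exactly one zero. -/
theorem stmt_10 {n : ℕ} (N : (Fin n → ℝ) → ℝ) (hN : IsNorm N)
    (f : (Fin n → ℝ) → (Fin n → ℝ)) (hf : ContDiff ℝ 1 f)
    (c : ℝ) (hc : 0 < c) (hμ : ∀ x, matMeasure N (jac f x) ≤ -c) :
    ∃! xs : Fin n → ℝ, f xs = 0 := by
  rcases eq_or_ne n 0 with rfl | hn
  · exact ⟨0, Subsingleton.elim _ _, fun _ _ => Subsingleton.elim _ _⟩
  obtain ⟨K, hK⟩ := hN.exists_antilipschitzWith hc (hN.mul_le_of_matMeasure_jac_le hn hf hμ)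
  obtain ⟨xs, hxs⟩ := hf.surjective_of_antilipschitzWith hK 0
  exact ⟨xs, hxs, fun y hy => hK.injective (hy.trans hxs.symm)⟩
end
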